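/- arXiv:1903.03900 — 2 statements merged into one kernel-verified Lean document; each statement's English description precedes it below -/
import Mathlib

section
/- Let (R, m, k) be a commutative Noetherian local ring and I an ideal of R. If the quotient map R → R/I is a large homomorphism, then I ∩ m² = mI (equivalently, the induced map Tor₁^R(R/I, k) → Tor₁^R(k, k) is injective, i.e. a minimal generating set of I can be completed to a minimal generating set of m). -/
/-!
STATEMENT 0: If `(R, 𝔪, k)` is a commutative Noetherian local ring, `I` an ideal of `R`,
and the quotient map `R → R/I` is a large homomorphism, then `I ∩ 𝔪² = 𝔪 I`.

A surjective local homomorphism `f : R → S` is *large* if the induced map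
`Tor_*^R(k,k) → Tor_*^S(k,k)` is surjective; equivalently (Levin, Theorem 1.1), the map
`Tor_*^R(S,k) → Tor_*^R(k,k)` induced by the augmentation `S → k = S/𝔪S` is injective.
We use the latter (equivalent) form as the definition, since it takes place entirely
over the ring `R`.
-/

open CategoryTheory IsLocalRing

universe u

/-- The residue `M/𝔪M` of an `R`-module `M` over a local ring `R`, as an object of
`ModuleCat R`.  For `M = R/I` with `I ≤ 𝔪` this is canonically the residue field `k`,
and for `M = R` it is `k` itself. -/
noncomputable def residueModule (R : Type u) [CommRing R] [IsLocalRing R]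
    (M : Type u) [AddCommGroup M] [Module R M] : ModuleCat.{u} R :=
  ModuleCat.of R (M ⧸ (maximalIdeal R • ⊤ : Submodule R M))

/-- The map `Tor_i^R(S, k) → Tor_i^R(S/𝔪S, k)` induced (in the first variable of `Tor`)
by the augmentation `S → S/𝔪S`.  When `S = R/I` is a local quotient ring of `R`, the target
is canonically `Tor_i^R(k,k)` and this is the map `φ_*` of Levin's Definition/Theorem 1.1. -/
noncomputable def torAugmentationMap (R : Type u) [CommRing R] [IsLocalRing R]
    (S : Type u) [AddCommGroup S] [Module R S] (i : ℕ) :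
    (((Tor (ModuleCat.{u} R) i).obj (ModuleCat.of R S)).obj
        (ModuleCat.of R (ResidueField R))) ⟶
      (((Tor (ModuleCat.{u} R) i).obj (residueModule R S)).obj
        (ModuleCat.of R (ResidueField R))) :=
  ((Tor (ModuleCat.{u} R) i).map
      (ModuleCat.ofHom (Submodule.mkQ (maximalIdeal R • ⊤ : Submodule R S)))).app
    (ModuleCat.of R (ResidueField R))

/-- The quotient map `R → R/I` is a *large* homomorphism of local rings:
the induced map `Tor_i^R(R/I, k) → Tor_i^R(k, k)` is injective for all `i ≥ 0`
(Levin's Definition/Theorem 1.1(2)). -/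
noncomputable def IsLargeQuotient (R : Type u) [CommRing R] [IsLocalRing R]
    (I : Ideal R) : Prop :=
  ∀ i : ℕ, Function.Injective (torAugmentationMap R (R ⧸ I) i)


/-!
Resolve `k` by projectives `P → k` and pick `e ∈ P₀` over `1 ∈ k`. For `x ∈ I ∩ 𝔪²` we have
`x e = d q` with `q ∈ 𝔪 P₁`, because `𝔪 e ⊆ ker (P₀ → k) = d P₁`. The element `1 ⊗ q` is then a
cycle of `R/I ⊗ P` (as `x ∈ I`) whose image in `k ⊗ P` vanishes (as `q ∈ 𝔪 P₁`), so injectivity of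
`Tor₁^R(R/I, k) → Tor₁^R(k, k)` makes it a boundary: `q ∈ d P₂ + I P₁`. Hence
`x e ∈ I · d P₁ ⊆ I · ker (P₀ → k)`, and a lift `σ : P₀ → R` of `P₀ → k` sends `e` to a unit and
`ker (P₀ → k)` into `𝔪`, so `x ∈ 𝔪 I`.
-/

open MonoidalCategory TensorProduct

section Homology

variable {C D : Type*} [Category C] [Category D] [Abelian C] [Abelian D]

theorem CategoryTheory.ProjectiveResolution.mono_homologyMap_of_mono_leftDerived
    [HasProjectiveResolutions C] {F G : C ⥤ D} [F.Additive] [G.Additive] (α : F ⟶ G) {X : C}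
    (P : ProjectiveResolution X) (n : ℕ) [Mono ((NatTrans.leftDerived α n).app X)] :
    Mono (HomologicalComplex.homologyMap
      ((NatTrans.mapHomologicalComplex α _).app P.complex) n) :=
  ((MorphismProperty.monomorphisms D).arrow_mk_iso_iff
    (Arrow.isoMk (f := Arrow.mk ((NatTrans.leftDerived α n).app X))
      (P.isoLeftDerivedObj F n) (P.isoLeftDerivedObj G n)
      (by
        rw [ProjectiveResolution.leftDerived_app_eq α P n]
        simp only [Arrow.mk_hom, Category.assoc]
        -- `K.homology n` and `(homologyFunctor _ _ n).obj K` agree only up to unfolding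
        erw [Iso.inv_hom_id, Category.comp_id]
        rfl))).1 ‹_›

theorem HomologicalComplex.mono_homologyMap_sc'_map {ι : Type*} {c : ComplexShape ι}
    {K L : HomologicalComplex C c} (φ : K ⟶ L) {i j k : ι} (hi : c.prev j = i)
    (hk : c.next j = k) [Mono (homologyMap φ j)] :
    Mono (ShortComplex.homologyMap ((shortComplexFunctor' C c i j k).map φ)) :=
  ((MorphismProperty.monomorphisms C).arrow_mk_iso_iff
    (Arrow.isoOfNatIso (homologyFunctorIso' C c i j k hi hk) (Arrow.mk φ))).1 ‹_›

theorem CategoryTheory.ShortComplex.moduleCat_exists_f_eq_of_mono_homologyMap {R : Type*}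
    [Ring R] {S T : ShortComplex (ModuleCat R)} (φ : S ⟶ T) [Mono (homologyMap φ)] {z : S.X₂}
    (hz : S.g z = 0) (hφz : φ.τ₂ z = 0) : ∃ w, S.f w = z := by
  set c := S.moduleCatCyclesIso.inv ⟨z, hz⟩
  have hc : S.iCycles c = z := S.moduleCatCyclesIso_inv_iCycles_apply _
  have hφc : cyclesMap φ c = 0 := (ModuleCat.mono_iff_injective T.iCycles).1 inferInstance <| by
    rw [← ConcreteCategory.comp_apply, cyclesMap_i, ConcreteCategory.comp_apply, hc, hφz, map_zero]
  have hπc : S.homologyπ c = 0 := (ModuleCat.mono_iff_injective (homologyMap φ)).1 ‹_› <| by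
    rw [← ConcreteCategory.comp_apply, homologyπ_naturality, ConcreteCategory.comp_apply, hφc,
      map_zero, map_zero]
  have hπz : S.moduleCatLeftHomologyData.π ⟨z, hz⟩ = 0 :=
    (ModuleCat.mono_iff_injective S.moduleCatHomologyIso.inv).1 inferInstance <|
      (S.moduleCatCyclesIso_inv_π_apply _).symm.trans (hπc.trans (map_zero _).symm)
  obtain ⟨w, hw⟩ := (Submodule.Quotient.mk_eq_zero _).1 hπz
  exact ⟨w, congrArg Subtype.val hw⟩

end Homology

section Modules

variable {R M N : Type*} [CommRing R] [AddCommGroup M] [Module R M] [AddCommGroup N] [Module R N]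

theorem Submodule.smul_mem_map_smul_top_of_mem_mul {f : N →ₗ[R] M} {e : M} {J J' : Ideal R}
    (he : ∀ b ∈ J', b • e ∈ LinearMap.range f) {x : R} (hx : x ∈ J * J') :
    x • e ∈ (J • ⊤ : Submodule R N).map f := by
  have hJ' : J' • span R {e} ≤ LinearMap.range f := Submodule.smul_le.2 fun b hb m hm => by
    obtain ⟨c, rfl⟩ := mem_span_singleton.1 hm
    rw [smul_comm]
    exact (LinearMap.range f).smul_mem c (he b hb)
  rw [map_smul'', map_top]
  refine smul_mono_right J hJ' ?_
  rw [← Submodule.mul_smul]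
  exact smul_mem_smul hx (mem_span_singleton_self e)

theorem Submodule.mkQ_tmul_eq_zero_of_mem_smul_top (J : Ideal R) (n : N) {m : M}
    (hm : m ∈ J • (⊤ : Submodule R M)) : (J • ⊤ : Submodule R N).mkQ n ⊗ₜ[R] m = 0 := by
  refine Submodule.smul_induction_on hm (fun a ha m _ => ?_) (fun m m' hm hm' => ?_)
  · rw [← smul_tmul, ← map_smul, mkQ_apply, (Quotient.mk_eq_zero _).2 (smul_mem_smul ha mem_top),
      zero_tmul]
  · rw [tmul_add, hm, hm', add_zero]

theorem Ideal.Quotient.exists_one_tmul_eq (I : Ideal R) (t : (R ⧸ I) ⊗[R] M) :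
    ∃ m : M, (1 : R ⧸ I) ⊗ₜ[R] m = t := by
  obtain ⟨m, hm⟩ := Submodule.Quotient.mk_surjective _ (quotTensorEquivQuotSMul M I t)
  exact ⟨m, (quotTensorEquivQuotSMul M I).injective
    (by rw [quotTensorEquivQuotSMul_mk_one_tmul, hm])⟩

theorem Ideal.Quotient.one_tmul_eq_one_tmul_iff (I : Ideal R) {m m' : M} :
    (1 : R ⧸ I) ⊗ₜ[R] m = 1 ⊗ₜ m' ↔ m - m' ∈ I • (⊤ : Submodule R M) := by
  rw [← (quotTensorEquivQuotSMul M I).injective.eq_iff, quotTensorEquivQuotSMul_mk_one_tmul,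
    quotTensorEquivQuotSMul_mk_one_tmul, Submodule.Quotient.eq]

theorem IsLocalRing.mem_mul_maximalIdeal_of_smul_mem_smul_ker [IsLocalRing R]
    [Module.Projective R M] (π : M →ₗ[R] ResidueField R) {e : M} (he : π e = 1) (I : Ideal R)
    {x : R} (hx : x • e ∈ I • LinearMap.ker π) : x ∈ I * maximalIdeal R := by
  obtain ⟨σ, hσ⟩ := Module.projective_lifting_property (Algebra.linearMap R (ResidueField R)) π
    residue_surjective
  have hσπ : ∀ m, residue R (σ m) = π m := fun m => LinearMap.congr_fun hσ m
  have hker : (LinearMap.ker π).map σ ≤ maximalIdeal R := by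
    rintro _ ⟨m, hm, rfl⟩
    rw [← residue_eq_zero_iff, hσπ]
    exact hm
  have hunit : IsUnit (σ e) := by
    rw [← residue_ne_zero_iff_isUnit, hσπ, he]
    exact one_ne_zero
  have hσx : σ (x • e) ∈ I • maximalIdeal R :=
    smul_mono_right I hker (Submodule.map_smul'' I _ σ ▸ Submodule.mem_map_of_mem hx)
  rwa [map_smul, Ideal.smul_eq_mul, smul_eq_mul, Ideal.mul_unit_mem_iff_mem _ hunit] at hσx

end Modules

namespace CategoryTheory.ProjectiveResolution

variable {R : Type u} [CommRing R] [IsLocalRing R]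
  (P : ProjectiveResolution (ModuleCat.of R (ResidueField R)))

theorem exists_lTensor_eq_of_injective_torAugmentationMap {S : Type u} [AddCommGroup S]
    [Module R S] {n : ℕ} (hinj : Function.Injective (torAugmentationMap R S (n + 1)))
    {z : S ⊗[R] P.complex.X (n + 1)} (hz : (P.complex.d (n + 1) n).hom.lTensor S z = 0)
    (hz' : (maximalIdeal R • ⊤ : Submodule R S).mkQ.rTensor _ z = 0) :
    ∃ w, (P.complex.d (n + 2) (n + 1)).hom.lTensor S w = z := by
  let α := (tensoringLeft (ModuleCat R)).map
    (ModuleCat.ofHom (maximalIdeal R • ⊤ : Submodule R S).mkQ)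
  have hTor : Mono ((NatTrans.leftDerived α (n + 1)).app (ModuleCat.of R (ResidueField R))) :=
    (ModuleCat.mono_iff_injective _).2 hinj
  have hH := P.mono_homologyMap_of_mono_leftDerived α (n + 1)
  let φ := (NatTrans.mapHomologicalComplex α _).app P.complex
  have hH' := HomologicalComplex.mono_homologyMap_sc'_map φ (i := n + 2) (j := n + 1) (k := n)
    (by simp) (by simp)
  exact ShortComplex.moduleCat_exists_f_eq_of_mono_homologyMap
    ((HomologicalComplex.shortComplexFunctor' _ _ (n + 2) (n + 1) n).map φ) hz hz'

variable {P} {e : P.complex.X 0}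

theorem exists_d_eq_smul_of_mem_sq (he : P.π.f 0 e = (1 : ResidueField R)) {x : R}
    (hx : x ∈ maximalIdeal R ^ 2) :
    ∃ q ∈ (maximalIdeal R • ⊤ : Submodule R (P.complex.X 1)), P.complex.d 1 0 q = x • e := by
  refine Submodule.smul_mem_map_smul_top_of_mem_mul (fun b hb => ?_) (sq (maximalIdeal R) ▸ hx)
  rw [P.exact₀.moduleCat_range_eq_ker, LinearMap.mem_ker, map_smul, he]
  show b • (1 : ResidueField R) = 0
  rwa [← Algebra.algebraMap_eq_smul_one, ResidueField.algebraMap_eq, residue_eq_zero_iff]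

theorem mem_mul_maximalIdeal_of_d_eq_smul (he : P.π.f 0 e = (1 : ResidueField R))
    (I : Ideal R) {x : R} {q : P.complex.X 1}
    {w : P.complex.X 2} (hqw : q - P.complex.d 2 1 w ∈ (I • ⊤ : Submodule R (P.complex.X 1)))
    (hq : P.complex.d 1 0 q = x • e) : x ∈ I * maximalIdeal R := by
  have hdd : P.complex.d 1 0 (P.complex.d 2 1 w) = 0 := by
    rw [← ConcreteCategory.comp_apply, P.complex.d_comp_d]
    rfl
  have hexact : LinearMap.range (P.complex.d 1 0).hom = LinearMap.ker (P.π.f 0).hom :=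
    P.exact₀.moduleCat_range_eq_ker
  have hxe : x • e ∈ I • LinearMap.ker (P.π.f 0).hom := by
    rw [← hq, ← sub_zero (P.complex.d 1 0 q), ← hdd, ← map_sub, ← hexact,
      LinearMap.range_eq_map, ← Submodule.map_smul'']
    exact Submodule.mem_map_of_mem hqw
  exact mem_mul_maximalIdeal_of_smul_mem_smul_ker (P.π.f 0).hom he I hxe

end CategoryTheory.ProjectiveResolution

theorem large_implies_inf_sq_eq_smul_general
    (R : Type u) [CommRing R] [IsLocalRing R]
    (I : Ideal R) (hI : I ≤ maximalIdeal R)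
    (hlarge : IsLargeQuotient R I) :
    I ⊓ maximalIdeal R ^ 2 = maximalIdeal R * I := by
  refine le_antisymm (fun x ⟨hxI, hxm⟩ => ?_)
    (le_inf Ideal.mul_le_right (sq (maximalIdeal R) ▸ Ideal.mul_mono_right hI))
  obtain ⟨P⟩ := HasProjectiveResolution.out (Z := ModuleCat.of R (ResidueField R))
  obtain ⟨e, he⟩ := (ModuleCat.epi_iff_surjective (P.π.f 0)).1 inferInstance (1 : ResidueField R)
  obtain ⟨q, hq, hdq⟩ := P.exists_d_eq_smul_of_mem_sq he hxm
  have hcycle : (P.complex.d 1 0).hom.lTensor (R ⧸ I) ((1 : R ⧸ I) ⊗ₜ q) = 0 := by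
    rw [LinearMap.lTensor_tmul, hdq, ← smul_tmul, Algebra.smul_def, mul_one,
      Ideal.Quotient.algebraMap_eq, Ideal.Quotient.eq_zero_iff_mem.2 hxI, zero_tmul]
  obtain ⟨w, hw⟩ := P.exists_lTensor_eq_of_injective_torAugmentationMap (n := 0) (hlarge 1)
    hcycle (Submodule.mkQ_tmul_eq_zero_of_mem_smul_top _ _ hq)
  obtain ⟨w, rfl⟩ := Ideal.Quotient.exists_one_tmul_eq I w
  rw [LinearMap.lTensor_tmul, eq_comm, Ideal.Quotient.one_tmul_eq_one_tmul_iff] at hw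
  rw [mul_comm]
  exact P.mem_mul_maximalIdeal_of_d_eq_smul he I hw hdq

theorem large_implies_inf_sq_eq_smul
    (R : Type u) [CommRing R] [IsNoetherianRing R] [IsLocalRing R]
    (I : Ideal R) (hI : I ≤ maximalIdeal R)
    (hlarge : IsLargeQuotient R I) :
    I ⊓ maximalIdeal R ^ 2 = maximalIdeal R * I :=
  large_implies_inf_sq_eq_smul_general R I hI hlarge
end

section
/- Let (R, m, k) be a commutative Noetherian local ring and let I, J be ideals of R such that m = I ⊕ J (that is, m = I + J and I ∩ J = 0). Then for every i ≥ 0 the map Tor_i^R(R/I, k) → Tor_i^R(k, k) induced by the surjection R/I → k is injective; in particular the quotient map R → R/I is a large homomorphism. -/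
/-!
STATEMENT 3: Let `(R, 𝔪, k)` be a commutative Noetherian local ring and `I, J` ideals
with `𝔪 = I ⊕ J` (i.e. `I + J = 𝔪` and `I ∩ J = 0`).  Then for every `i ≥ 0` the map
`Tor_i^R(R/I, k) → Tor_i^R(k, k)` induced by the surjection `R/I → k` is injective;
in particular `R → R/I` is a large homomorphism.

Here the augmentation `R/I → k` is realized as `R/I → (R/I)/𝔪(R/I)`, whose target is
canonically `k` (as `I ≤ 𝔪`).
-/

open CategoryTheory IsLocalRing

universe u

/-!
Write `S = R/I`. As `I ∩ J = 0`, the quotient map restricts to an isomorphism `J ≅ 𝔪S`, so the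
inclusion `𝔪S → S` factors as `𝔪S ≅ J ⊆ R → S` with `J ⊆ 𝔪 = Ann k`. Computing `Tor(-, k)` with a
projective resolution `P → k`, the map `𝔪S ⊗ P → S ⊗ P` factors through `R ⊗ P ≅ P`, and its
composite with the quasi-isomorphism `P → k` is zero; hence `Tor_i(𝔪S, k) → Tor_i(S, k)` vanishes
for every `i`, and the long exact sequence of `0 → 𝔪S → S → k → 0` makes
`Tor_i(S, k) → Tor_i(k, k)` injective.
-/

section QuotientByIdeal

variable {R : Type u} [CommRing R] {I J K : Ideal R}

theorem Ideal.map_mkQ_eq_smul_top_of_sup_eq (hsum : I ⊔ J = K) :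
    Submodule.map I.mkQ J = (K • ⊤ : Submodule R (R ⧸ I)) := by
  rw [← Submodule.range_mkQ I, ← Submodule.map_top, ← Submodule.map_smul'', ← hsum,
    Ideal.smul_top_eq_map]
  simp [Submodule.map_sup, Submodule.mkQ_map_self]

theorem Ideal.injective_mkQ_comp_subtype_of_inf_eq_bot (hint : I ⊓ J = ⊥) :
    Function.Injective (I.mkQ ∘ₗ J.subtype) := by
  rw [← LinearMap.ker_eq_bot, LinearMap.ker_comp, Submodule.ker_mkQ,
    ← Submodule.disjoint_iff_comap_eq_bot, disjoint_iff, inf_comm, hint]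

theorem Ideal.exists_lift_smul_top_subtype (hsum : I ⊔ J = K) (hint : I ⊓ J = ⊥) :
    ∃ σ : (K • ⊤ : Submodule R (R ⧸ I)) →ₗ[R] R,
      I.mkQ ∘ₗ σ = (K • ⊤ : Submodule R (R ⧸ I)).subtype ∧ ∀ x, σ x ∈ J := by
  have hrange : LinearMap.range (I.mkQ ∘ₗ J.subtype) = K • ⊤ := by
    rw [LinearMap.range_comp, Submodule.range_subtype, map_mkQ_eq_smul_top_of_sup_eq hsum]
  let e := (LinearEquiv.ofInjective _ (injective_mkQ_comp_subtype_of_inf_eq_bot hint)).trans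
    (LinearEquiv.ofEq _ _ hrange)
  refine ⟨J.subtype ∘ₗ e.symm.toLinearMap, ?_, fun x => (e.symm x).2⟩
  ext x
  exact congrArg Subtype.val (e.apply_symm_apply x)

end QuotientByIdeal

namespace CategoryTheory.ProjectiveResolution

open MonoidalCategory HomologicalComplex

variable {R : Type u} [CommRing R] {Y : ModuleCat.{u} R} (P : ProjectiveResolution Y)

-- `Tor` is left-derived in its second variable, so `Tor_i(f, Y)` is the homology of this map.
noncomputable def tensorLeftMap {M₁ M₂ : ModuleCat.{u} R} (f : M₁ ⟶ M₂) :
    (((tensoringLeft _).obj M₁).mapHomologicalComplex _).obj P.complex ⟶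
      (((tensoringLeft _).obj M₂).mapHomologicalComplex _).obj P.complex :=
  (NatTrans.mapHomologicalComplex ((tensoringLeft _).map f) _).app P.complex

theorem tensorLeftMap_comp {M₁ M₂ M₃ : ModuleCat.{u} R} (f : M₁ ⟶ M₂) (g : M₂ ⟶ M₃) :
    P.tensorLeftMap (f ≫ g) = P.tensorLeftMap f ≫ P.tensorLeftMap g := by
  rw [tensorLeftMap, Functor.map_comp, NatTrans.mapHomologicalComplex_comp]
  rfl

theorem flat_complex_X (n : ℕ) : Module.Flat R (P.complex.X n) :=
  have : Module.Projective R (P.complex.X n) :=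
    (IsProjective.iff_projective _).mpr (inferInstanceAs (Projective (P.complex.X n)))
  inferInstance

noncomputable def tensorUnitIso :
    (((tensoringLeft _).obj (ModuleCat.of R R)).mapHomologicalComplex _).obj P.complex ≅
      P.complex :=
  Hom.isoOfComponents (fun n => λ_ (P.complex.X n))
    fun _ _ _ => (leftUnitor_naturality _).symm

theorem tensorLeftMap_comp_tensorUnitIso_comp_π {M : ModuleCat.{u} R}
    (f : M ⟶ ModuleCat.of R R) (hf : ∀ x, f x ∈ Module.annihilator R Y) :
    P.tensorLeftMap f ≫ P.tensorUnitIso.hom ≫ P.π = 0 := by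
  ext : 1
  apply ModuleCat.hom_ext
  apply TensorProduct.ext'
  intro x p
  change (P.π.f 0).hom (f x • p) = 0
  rw [map_smul]
  exact Module.mem_annihilator.mp (hf x) _

theorem homologyMap_tensorLeftMap_eq_zero_of_mem_annihilator {M : ModuleCat.{u} R}
    (f : M ⟶ ModuleCat.of R R) (hf : ∀ x, f x ∈ Module.annihilator R Y) (i : ℕ) :
    homologyMap (P.tensorLeftMap f) i = 0 := by
  have : IsIso (homologyMap (P.tensorUnitIso.hom ≫ P.π) i) := by
    rw [homologyMap_comp]
    have : IsIso (homologyMap P.π i) := (quasiIsoAt_iff_isIso_homologyMap _ _).1 inferInstance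
    infer_instance
  rw [← cancel_mono (homologyMap (P.tensorUnitIso.hom ≫ P.π) i), ← homologyMap_comp,
    P.tensorLeftMap_comp_tensorUnitIso_comp_π f hf, homologyMap_zero, Limits.zero_comp]

variable {M : Type u} [AddCommGroup M] [Module R M] (N : Submodule R M)

theorem tensorLeftMap_subtype_comp_tensorLeftMap_mkQ :
    P.tensorLeftMap (ModuleCat.ofHom N.subtype) ≫ P.tensorLeftMap (ModuleCat.ofHom N.mkQ) = 0 := by
  ext n : 1
  apply ModuleCat.hom_ext
  apply TensorProduct.ext'
  intro x p
  change Submodule.Quotient.mk (x : M) ⊗ₜ p = 0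
  rw [(Submodule.Quotient.mk_eq_zero N).mpr x.2, TensorProduct.zero_tmul]

theorem shortExact_tensorLeftMap_subtype_mkQ :
    (ShortComplex.mk _ _ (P.tensorLeftMap_subtype_comp_tensorLeftMap_mkQ N)).ShortExact := by
  refine shortExact_of_degreewise_shortExact _ fun n => ?_
  have := P.flat_complex_X n
  refine .mk' ?_ ?_ ?_
  · rw [ShortComplex.moduleCat_exact_iff]
    intro x hx
    exact (rTensor_exact _ (LinearMap.exact_subtype_mkQ N) N.mkQ_surjective x).mp hx
  · rw [ModuleCat.mono_iff_injective]
    exact Module.Flat.rTensor_preserves_injective_linearMap _ N.injective_subtype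
  · rw [ModuleCat.epi_iff_surjective]
    exact LinearMap.rTensor_surjective _ N.mkQ_surjective

theorem mono_homologyMap_tensorLeftMap_mkQ {i : ℕ}
    (h : homologyMap (P.tensorLeftMap (ModuleCat.ofHom N.subtype)) i = 0) :
    Mono (homologyMap (P.tensorLeftMap (ModuleCat.ofHom N.mkQ)) i) :=
  ((P.shortExact_tensorLeftMap_subtype_mkQ N).homology_exact₂ i).mono_g h

end CategoryTheory.ProjectiveResolution

open HomologicalComplex in
theorem injective_Tor_map_mkQ_of_subtype_eq_comp {R : Type u} [CommRing R]
    {M : Type u} [AddCommGroup M] [Module R M] (Y : ModuleCat.{u} R) (N : Submodule R M)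
    (σ : N →ₗ[R] R) (q : R →ₗ[R] M) (hfac : q ∘ₗ σ = N.subtype)
    (hσ : ∀ x, σ x ∈ Module.annihilator R Y) (i : ℕ) :
    Function.Injective (((Tor (ModuleCat.{u} R) i).map (ModuleCat.ofHom N.mkQ)).app Y) := by
  obtain ⟨P⟩ := HasProjectiveResolution.out (Z := Y)
  have hsubtype : homologyMap (P.tensorLeftMap (ModuleCat.ofHom N.subtype)) i = 0 := by
    rw [← hfac, ModuleCat.ofHom_comp, P.tensorLeftMap_comp, homologyMap_comp,
      P.homologyMap_tensorLeftMap_eq_zero_of_mem_annihilator _ hσ, Limits.zero_comp]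
  have := P.mono_homologyMap_tensorLeftMap_mkQ N hsubtype
  rw [← ModuleCat.mono_iff_injective]
  change Mono ((NatTrans.leftDerived _ i).app Y)
  rw [P.leftDerived_app_eq]
  exact mono_comp' inferInstance (mono_comp' this inferInstance)

theorem IsLocalRing.annihilator_residueField (R : Type u) [CommRing R] [IsLocalRing R] :
    Module.annihilator R (ResidueField R) = maximalIdeal R :=
  Ideal.annihilator_quotient

theorem large_of_maximalIdeal_direct_sum_general
    (R : Type u) [CommRing R] [IsLocalRing R]
    (I J : Ideal R)
    (hsum : I ⊔ J = maximalIdeal R) (hint : I ⊓ J = ⊥) :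
    (∀ i : ℕ, Function.Injective (torAugmentationMap R (R ⧸ I) i)) ∧
      IsLargeQuotient R I := by
  obtain ⟨σ, hfac, hσJ⟩ := Ideal.exists_lift_smul_top_subtype hsum hint
  have hσ (x) : σ x ∈ Module.annihilator R (ResidueField R) := by
    rw [annihilator_residueField]
    exact hsum.le (Ideal.mem_sup_right (hσJ x))
  have hinj (i : ℕ) : Function.Injective (torAugmentationMap R (R ⧸ I) i) :=
    injective_Tor_map_mkQ_of_subtype_eq_comp _ _ σ I.mkQ hfac hσ i
  exact ⟨hinj, hinj⟩

theorem large_of_maximalIdeal_direct_sum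
    (R : Type u) [CommRing R] [IsNoetherianRing R] [IsLocalRing R]
    (I J : Ideal R)
    (hsum : I ⊔ J = maximalIdeal R) (hint : I ⊓ J = ⊥) :
    (∀ i : ℕ, Function.Injective (torAugmentationMap R (R ⧸ I) i)) ∧
      IsLargeQuotient R I :=
  large_of_maximalIdeal_direct_sum_general R I J hsum hint
end
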